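/- Let M and S be G-graded A-modules and suppose K × S is a graded classical weakly prime A-submodule of M × S. If (x, y, L) is a graded classical triple zero of K (in M), then xAy ⊆ Ann_A(S). -/

import Mathlib

section GCWP

variable {G : Type*} [AddGroup G] [DecidableEq G]
variable {A : Type*} [Ring A] {M : Type*} [AddCommGroup M] [Module A M]

/-- A submodule is graded (homogeneous) if it is generated by its homogeneous elements. -/
def IsGrSub (ℳ : G → AddSubgroup M) (K : Submodule A M) : Prop :=
  K ≤ Submodule.span A ((K : Set M) ∩ {m | SetLike.IsHomogeneousElem ℳ m})

/-- `K` is a graded classical weakly prime submodule. -/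
def IsGCWP (𝒜 : G → AddSubgroup A) (ℳ : G → AddSubgroup M) (K : Submodule A M) : Prop :=
  K ≠ ⊤ ∧ IsGrSub ℳ K ∧
  ∀ x y : A, SetLike.IsHomogeneousElem 𝒜 x → SetLike.IsHomogeneousElem 𝒜 y →
    ∀ L : Submodule A M, IsGrSub ℳ L →
      (∃ a : A, ∃ l ∈ L, (x * a * y) • l ≠ 0) →
      (∀ a : A, ∀ l ∈ L, (x * a * y) • l ∈ K) →
      (∀ l ∈ L, x • l ∈ K) ∨ (∀ l ∈ L, y • l ∈ K)

/-- `K` is a graded classical prime submodule. -/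
def IsGCP (𝒜 : G → AddSubgroup A) (ℳ : G → AddSubgroup M) (K : Submodule A M) : Prop :=
  K ≠ ⊤ ∧ IsGrSub ℳ K ∧
  ∀ x y : A, SetLike.IsHomogeneousElem 𝒜 x → SetLike.IsHomogeneousElem 𝒜 y →
    ∀ L : Submodule A M, IsGrSub ℳ L →
      (∀ a : A, ∀ l ∈ L, (x * a * y) • l ∈ K) →
      (∀ l ∈ L, x • l ∈ K) ∨ (∀ l ∈ L, y • l ∈ K)

/-- `(x, y, L)` is a graded classical triple zero of `K`. -/
def TripleZero (K : Submodule A M) (x y : A) (L : Submodule A M) : Prop :=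
  (∀ a : A, ∀ l ∈ L, (x * a * y) • l = 0) ∧
    ¬ (∀ l ∈ L, x • l ∈ K) ∧ ¬ (∀ l ∈ L, y • l ∈ K)

/-- `L` is an `A_e`-submodule of `M_g` (as an additive subgroup of `M`). -/
def IsAeSub (𝒜 : G → AddSubgroup A) (ℳ : G → AddSubgroup M) (g : G) (L : AddSubgroup M) : Prop :=
  (L : Set M) ⊆ (ℳ g : Set M) ∧ ∀ a ∈ 𝒜 0, ∀ l ∈ L, a • l ∈ L

/-- `L` is a faithful `A_e`-module. -/
def AeFaithful (𝒜 : G → AddSubgroup A) (L : AddSubgroup M) : Prop :=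
  ∀ a ∈ 𝒜 0, (∀ l ∈ L, a • l = 0) → a = 0

/-- `I` is an ideal of `A_e` (as an additive subgroup of `A`). -/
def IsAeIdeal (𝒜 : G → AddSubgroup A) (I : AddSubgroup A) : Prop :=
  (I : Set A) ⊆ (𝒜 0 : Set A) ∧ ∀ a ∈ 𝒜 0, ∀ r ∈ I, a * r ∈ I ∧ r * a ∈ I

/-- `K` is a `g`-classical weakly prime submodule of `M`. -/
def IsgCWP (𝒜 : G → AddSubgroup A) (ℳ : G → AddSubgroup M) (g : G) (K : Submodule A M) :
    Prop :=
  IsGrSub ℳ K ∧ ¬ ((ℳ g : Set M) ⊆ (K : Set M)) ∧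
  ∀ x ∈ 𝒜 0, ∀ y ∈ 𝒜 0, ∀ L : AddSubgroup M, IsAeSub 𝒜 ℳ g L →
    (∃ a ∈ 𝒜 0, ∃ l ∈ L, (x * a * y) • l ≠ 0) →
    (∀ a ∈ 𝒜 0, ∀ l ∈ L, (x * a * y) • l ∈ K) →
    (∀ l ∈ L, x • l ∈ K) ∨ (∀ l ∈ L, y • l ∈ K)

/-- `P` is a weakly prime (proper) left ideal of `A_e`, given as a subset of `A`. -/
def IsWeaklyPrimeAe (𝒜 : G → AddSubgroup A) (P : Set A) : Prop :=
  P ⊆ (𝒜 0 : Set A) ∧ ¬ ((𝒜 0 : Set A) ⊆ P) ∧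
  (0 : A) ∈ P ∧ (∀ p ∈ P, ∀ q ∈ P, p + q ∈ P) ∧ (∀ p ∈ P, -p ∈ P) ∧
  (∀ a ∈ 𝒜 0, ∀ p ∈ P, a * p ∈ P) ∧
  ∀ I J : AddSubgroup A, IsAeIdeal 𝒜 I → IsAeIdeal 𝒜 J →
    (∃ i ∈ I, ∃ j ∈ J, i * j ≠ 0) → (∀ i ∈ I, ∀ j ∈ J, i * j ∈ P) →
    (I : Set A) ⊆ P ∨ (J : Set A) ⊆ P

end GCWP

section GW2A
variable {G : Type*} [AddGroup G] [DecidableEq G]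
variable {A : Type*} [Ring A] {M : Type*} [AddCommGroup M] [Module A M]

/-- `K` is a graded weakly 2-absorbing submodule. -/
def IsGW2A (𝒜 : G → AddSubgroup A) (ℳ : G → AddSubgroup M) (K : Submodule A M) : Prop :=
  K ≠ ⊤ ∧ IsGrSub ℳ K ∧
  ∀ x y : A, SetLike.IsHomogeneousElem 𝒜 x → SetLike.IsHomogeneousElem 𝒜 y →
    ∀ L : Submodule A M, IsGrSub ℳ L →
      (∃ a : A, ∃ l ∈ L, (x * a * y) • l ≠ 0) →
      (∀ a : A, ∀ l ∈ L, (x * a * y) • l ∈ K) →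
      (∀ l ∈ L, x • l ∈ K) ∨ (∀ l ∈ L, y • l ∈ K) ∨
        (∀ a : A, ∀ m : M, (x * a * y) • m ∈ K)

end GW2A

/-! If `(x * a * y) • s ≠ 0`, the graded submodule `L × S` satisfies
`0 ≠ x A y (L × S) ⊆ K × S`, the containment because `x A y L = 0`. Weak primeness of `K × S`
then puts `x (L × S)` or `y (L × S)` inside `K × S`, so `x L ⊆ K` or `y L ⊆ K`, contradicting the
triple zero. -/

section GradedSubmodule

open SetLike

variable {G : Type*} {A : Type*} [Ring A]
variable {M : Type*} [AddCommGroup M] [Module A M] {N : Type*} [AddCommGroup N] [Module A N]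
variable {ℳ : G → AddSubgroup M} {𝒩 : G → AddSubgroup N}

theorem isGrSub_top [DecidableEq G] [DirectSum.Decomposition 𝒩] :
    IsGrSub 𝒩 (⊤ : Submodule A N) := by
  rintro n -
  induction n using DirectSum.Decomposition.inductionOn 𝒩 with
  | zero => exact Submodule.zero_mem _
  | homogeneous m => exact Submodule.subset_span ⟨trivial, _, m.2⟩
  | add m m' hm hm' => exact Submodule.add_mem _ hm hm'

theorem IsGrSub.map {K : Submodule A M} (hK : IsGrSub ℳ K) (f : M →ₗ[A] N)
    (hf : ∀ m, IsHomogeneousElem ℳ m → IsHomogeneousElem 𝒩 (f m)) :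
    IsGrSub 𝒩 (K.map f) := by
  refine (Submodule.map_mono hK).trans ?_
  rw [Submodule.map_span]
  refine Submodule.span_mono ?_
  rintro _ ⟨m, ⟨hmK, hm⟩, rfl⟩
  exact ⟨Submodule.mem_map_of_mem hmK, hf m hm⟩

theorem IsGrSub.sup {K K' : Submodule A M} (hK : IsGrSub ℳ K) (hK' : IsGrSub ℳ K') :
    IsGrSub ℳ (K ⊔ K') :=
  sup_le (hK.trans (Submodule.span_mono fun _ hm => ⟨Submodule.mem_sup_left hm.1, hm.2⟩))
    (hK'.trans (Submodule.span_mono fun _ hm => ⟨Submodule.mem_sup_right hm.1, hm.2⟩))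

theorem IsGrSub.prod {K : Submodule A M} {K' : Submodule A N} (hK : IsGrSub ℳ K)
    (hK' : IsGrSub 𝒩 K') : IsGrSub (fun g => (ℳ g).prod (𝒩 g)) (K.prod K') := by
  rw [LinearMap.prod_eq_sup_map]
  refine (hK.map _ ?_).sup (hK'.map _ ?_)
  · rintro m ⟨g, hm⟩
    exact ⟨g, hm, zero_mem _⟩
  · rintro n ⟨g, hn⟩
    exact ⟨g, zero_mem _, hn⟩

end GradedSubmodule

section Theorems

variable {G : Type*} [AddGroup G] [DecidableEq G]
variable {A : Type*} [Ring A] {M : Type*} [AddCommGroup M] [Module A M]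
variable (𝒜 : G → AddSubgroup A) (ℳ : G → AddSubgroup M)
variable [SetLike.GradedMonoid 𝒜] [SetLike.GradedSMul 𝒜 ℳ]
variable [DirectSum.Decomposition 𝒜] [DirectSum.Decomposition ℳ]

theorem stmt16 {S : Type*} [AddCommGroup S] [Module A S] (𝒮 : G → AddSubgroup S)
    [DirectSum.Decomposition 𝒮]
    (K : Submodule A M)
    (hK : IsGCWP 𝒜 (fun g => (ℳ g).prod (𝒮 g)) (K.prod (⊤ : Submodule A S)))
    (x y : A) (hx : SetLike.IsHomogeneousElem 𝒜 x) (hy : SetLike.IsHomogeneousElem 𝒜 y)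
    (L : Submodule A M) (hL : IsGrSub ℳ L) (htz : TripleZero K x y L) :
    ∀ a : A, ∀ s : S, (x * a * y) • s = 0 := by
  obtain ⟨hxyL, hxL, hyL⟩ := htz
  by_contra! ⟨a, s, hs⟩
  have hnz : ∃ b : A, ∃ l ∈ L.prod (⊤ : Submodule A S), (x * b * y) • l ≠ 0 :=
    ⟨a, (0, s), ⟨L.zero_mem, trivial⟩, fun h => hs (congrArg Prod.snd h)⟩
  have hle : ∀ b : A, ∀ l ∈ L.prod (⊤ : Submodule A S),
      (x * b * y) • l ∈ K.prod (⊤ : Submodule A S) := by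
    rintro b ⟨m, t⟩ ⟨hm, -⟩
    exact ⟨show (x * b * y) • m ∈ K from hxyL b m hm ▸ K.zero_mem, trivial⟩
  rcases hK.2.2 x y hx hy _ (hL.prod isGrSub_top) hnz hle with h | h
  · exact hxL fun l hl => (h (l, 0) ⟨hl, trivial⟩).1
  · exact hyL fun l hl => (h (l, 0) ⟨hl, trivial⟩).1

end Theorems
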